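/- The Leech–Sloane 9-dimensional kissing configuration, consisting of the 288 vectors obtained by placing arbitrary signs ±1 on the four 1-entries of each of the 18 codewords of the weight-4 distance-4 code of length 9, together with the 18 vectors (±2, 0, ..., 0) and their coordinate permutations, is a set of 306 vectors in ℝ^9 each of squared norm 4 in which every pair of distinct vectors has inner product at most 2. -/

import Mathlib

/-!
Every vector of the configuration has entries `±a` on a support `s` and `0` elsewhere, with
`(a, #s) = (1, 4)` for the codeword vectors and `(2, 1)` for the axis vectors, so its squared
norm is `a² #s = 4`. For vectors on different supports the inner product is at most
`|a b| #(s ∩ t)`, which is at most `2`: two codewords share at most two positions, a codeword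
and an axis (`|a b| = 2`) at most one, and two different axes none. Two distinct vectors on the
same support have opposite signs somewhere, so `‖u - v‖² ≥ 4a²` and `⟪u, v⟫ ≤ a² (#s - 2) ≤ 2`.
Vectors on different supports are different, so there are `2⁴ · 18 + 2 · 9 = 306` of them.
-/

/-- The 18 codewords of the binary code of length 9, constant weight 4, minimum distance 4. -/
def code9 : List (Fin 9 → ℕ) :=
  [ ![1,1,0,1,1,0,0,0,0], ![1,1,0,0,0,1,0,0,1], ![1,1,0,0,0,0,1,1,0],
    ![1,0,1,1,0,1,0,0,0], ![1,0,1,0,1,0,0,1,0], ![1,0,1,0,0,0,1,0,1],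
    ![1,0,0,1,0,0,0,1,1], ![1,0,0,0,1,1,1,0,0], ![0,1,1,1,0,0,1,0,0],
    ![0,1,1,0,1,1,0,0,0], ![0,1,1,0,0,0,0,1,1], ![0,1,0,1,0,1,0,1,0],
    ![0,1,0,0,1,0,1,0,1], ![0,0,1,1,1,0,0,0,1], ![0,0,1,0,0,1,1,1,0],
    ![0,0,0,1,1,0,1,1,0], ![0,0,0,1,0,1,1,0,1], ![0,0,0,0,1,1,0,1,1] ]

/-- The Leech–Sloane nine-dimensional kissing configuration: arbitrary signs on the
supports of the codewords, together with all vectors `(±2, 0, …, 0)` up to permutation. -/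
def LS9 : Set (Fin 9 → ℝ) :=
  {v | ∃ c ∈ code9, ∀ i, (c i = 1 → (v i = 1 ∨ v i = -1)) ∧ (c i = 0 → v i = 0)} ∪
  {v | ∃ i, (v i = 2 ∨ v i = -2) ∧ ∀ j, j ≠ i → v j = 0}

section
open Finset

variable {ι : Type*} [Fintype ι] [DecidableEq ι]

noncomputable def signedVectors (s : Finset ι) (a : ℝ) : Finset (ι → ℝ) :=
  Fintype.piFinset fun i => if i ∈ s then {a, -a} else {0}

variable {s t : Finset ι} {a b : ℝ} {u v : ι → ℝ}

theorem mem_signedVectors :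
    v ∈ signedVectors s a ↔ ∀ i, (i ∈ s → v i = a ∨ v i = -a) ∧ (i ∉ s → v i = 0) := by
  simp only [signedVectors, Fintype.mem_piFinset]
  refine forall_congr' fun i => ?_
  by_cases hi : i ∈ s <;> simp [hi]

theorem card_signedVectors (ha : a ≠ 0) : #(signedVectors s a) = 2 ^ #s := by
  have hpair : #({a, -a} : Finset ℝ) = 2 := card_pair fun h => ha (by linarith)
  simp only [signedVectors, Fintype.card_piFinset, apply_ite card, hpair, card_singleton]
  rw [prod_ite_mem, univ_inter, prod_const]

theorem abs_apply_of_mem_signedVectors (hv : v ∈ signedVectors s a) (i : ι) :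
    |v i| = if i ∈ s then |a| else 0 := by
  obtain ⟨hs, hns⟩ := mem_signedVectors.mp hv i
  split_ifs with hi
  · rcases hs hi with h | h <;> simp [h]
  · simp [hns hi]

theorem apply_ne_zero_iff_of_mem_signedVectors (ha : a ≠ 0) (hv : v ∈ signedVectors s a)
    (i : ι) : v i ≠ 0 ↔ i ∈ s := by
  rw [← abs_ne_zero, abs_apply_of_mem_signedVectors hv]
  split_ifs with hi <;> simp [hi, ha]

theorem disjoint_signedVectors (ha : a ≠ 0) (hb : b ≠ 0) (hst : s ≠ t) :
    Disjoint (signedVectors s a) (signedVectors t b) := by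
  refine disjoint_left.mpr fun v hvs hvt => hst ?_
  ext i
  rw [← apply_ne_zero_iff_of_mem_signedVectors ha hvs,
    apply_ne_zero_iff_of_mem_signedVectors hb hvt]

theorem sum_mul_self_of_mem_signedVectors (hv : v ∈ signedVectors s a) :
    ∑ i, v i * v i = #s * a ^ 2 := by
  calc ∑ i, v i * v i = ∑ i, (if i ∈ s then a ^ 2 else 0) := by
        refine sum_congr rfl fun i _ => ?_
        rw [← abs_mul_abs_self, abs_apply_of_mem_signedVectors hv]
        split_ifs <;> simp [sq]
    _ = #s * a ^ 2 := by rw [sum_ite_mem, univ_inter, sum_const, nsmul_eq_mul]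

theorem sum_mul_le_of_mem_signedVectors (hu : u ∈ signedVectors s a)
    (hv : v ∈ signedVectors t b) : ∑ i, u i * v i ≤ #(s ∩ t) * |a * b| := by
  calc ∑ i, u i * v i ≤ ∑ i, |u i| * |v i| :=
        sum_le_sum fun i _ => (le_abs_self _).trans (abs_mul _ _).le
    _ = ∑ i, (if i ∈ s ∩ t then |a * b| else 0) := by
        refine sum_congr rfl fun i _ => ?_
        rw [abs_apply_of_mem_signedVectors hu, abs_apply_of_mem_signedVectors hv, abs_mul]
        by_cases hs : i ∈ s <;> by_cases ht : i ∈ t <;> simp [hs, ht]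
    _ = #(s ∩ t) * |a * b| := by rw [sum_ite_mem, univ_inter, sum_const, nsmul_eq_mul]

theorem sum_mul_le_of_mem_signedVectors_of_ne (hu : u ∈ signedVectors s a)
    (hv : v ∈ signedVectors s a) (huv : u ≠ v) : ∑ i, u i * v i ≤ (#s - 2) * a ^ 2 := by
  obtain ⟨j, hj⟩ := Function.ne_iff.mp huv
  have hjs : j ∈ s := by
    by_contra hjs
    exact hj (((mem_signedVectors.mp hu j).2 hjs).trans ((mem_signedVectors.mp hv j).2 hjs).symm)
  have hdiff : 4 * a ^ 2 ≤ ∑ i, (u i - v i) ^ 2 := by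
    have hj2 : (u j - v j) ^ 2 = 4 * a ^ 2 := by
      rcases (mem_signedVectors.mp hu j).1 hjs with h | h <;>
        rcases (mem_signedVectors.mp hv j).1 hjs with h' | h' <;> grind
    exact hj2 ▸ single_le_sum (fun i _ => sq_nonneg (u i - v i)) (mem_univ j)
  have hexpand :
      ∑ i, (u i - v i) ^ 2 = ∑ i, u i * u i + ∑ i, v i * v i - 2 * ∑ i, u i * v i := by
    simp only [mul_sum, ← sum_add_distrib, ← sum_sub_distrib]
    exact sum_congr rfl fun i _ => by ring
  rw [sum_mul_self_of_mem_signedVectors hu, sum_mul_self_of_mem_signedVectors hv] at hexpand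
  linarith

noncomputable def leechSloaneConfig (𝒞 : Finset (Finset ι)) : Finset (ι → ℝ) :=
  𝒞.biUnion (signedVectors · 1) ∪ univ.biUnion fun i => signedVectors {i} 2

variable {𝒞 : Finset (Finset ι)}

theorem mem_leechSloaneConfig : v ∈ leechSloaneConfig 𝒞 ↔
    (∃ s ∈ 𝒞, v ∈ signedVectors s 1) ∨ ∃ i, v ∈ signedVectors {i} 2 := by
  simp [leechSloaneConfig]

theorem card_leechSloaneConfig (h𝒞 : ∀ s ∈ 𝒞, #s = 4) :
    #(leechSloaneConfig 𝒞) = 16 * #𝒞 + 2 * Fintype.card ι := by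
  have hcode : #(𝒞.biUnion (signedVectors · 1)) = 16 * #𝒞 := by
    rw [card_biUnion fun s _ t _ hst => disjoint_signedVectors one_ne_zero one_ne_zero hst,
      sum_congr rfl fun s hs => by rw [card_signedVectors one_ne_zero, h𝒞 s hs], sum_const,
      smul_eq_mul]
    ring
  have haxes :
      #((univ : Finset ι).biUnion fun i => signedVectors {i} 2) = 2 * Fintype.card ι := by
    rw [card_biUnion fun i _ j _ hij => disjoint_signedVectors two_ne_zero two_ne_zero
        (singleton_injective.ne hij),
      sum_congr rfl fun i _ => by rw [card_signedVectors two_ne_zero, card_singleton], sum_const,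
      smul_eq_mul, pow_one, mul_comm, card_univ]
  have hdisj : Disjoint (𝒞.biUnion (signedVectors · 1))
      ((univ : Finset ι).biUnion fun i => signedVectors {i} 2) := by
    refine (disjoint_biUnion_left _ _ _).mpr fun s hs =>
      (disjoint_biUnion_right _ _ _).mpr fun i _ =>
        disjoint_signedVectors one_ne_zero two_ne_zero fun h => ?_
    simpa [h] using h𝒞 s hs
  rw [leechSloaneConfig, card_union_of_disjoint hdisj, hcode, haxes]

theorem sum_mul_self_of_mem_leechSloaneConfig (h𝒞 : ∀ s ∈ 𝒞, #s = 4)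
    (hv : v ∈ leechSloaneConfig 𝒞) : ∑ i, v i * v i = 4 := by
  rcases mem_leechSloaneConfig.mp hv with ⟨s, hs, hv⟩ | ⟨i, hv⟩
  all_goals rw [sum_mul_self_of_mem_signedVectors hv]
  · simp [h𝒞 s hs]
  · norm_num

theorem sum_mul_le_two_of_mem_leechSloaneConfig (h𝒞 : ∀ s ∈ 𝒞, #s = 4)
    (h𝒞₂ : ∀ s ∈ 𝒞, ∀ t ∈ 𝒞, s ≠ t → #(s ∩ t) ≤ 2)
    (hu : u ∈ leechSloaneConfig 𝒞) (hv : v ∈ leechSloaneConfig 𝒞) (huv : u ≠ v) :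
    ∑ i, u i * v i ≤ 2 := by
  rcases mem_leechSloaneConfig.mp hu with ⟨s, hs, hu⟩ | ⟨i, hu⟩ <;>
    rcases mem_leechSloaneConfig.mp hv with ⟨t, ht, hv⟩ | ⟨j, hv⟩
  · obtain rfl | hst := eq_or_ne s t
    · have := sum_mul_le_of_mem_signedVectors_of_ne hu hv huv
      norm_num [h𝒞 s hs] at this
      linarith
    · have := sum_mul_le_of_mem_signedVectors hu hv
      have hst : (#(s ∩ t) : ℝ) ≤ 2 := by exact_mod_cast h𝒞₂ s hs t ht hst
      norm_num at this
      linarith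
  · have := sum_mul_le_of_mem_signedVectors hu hv
    have hsj : (#(s ∩ {j}) : ℝ) ≤ 1 := by
      exact_mod_cast card_singleton j ▸ card_le_card inter_subset_right
    norm_num at this
    linarith
  · have := sum_mul_le_of_mem_signedVectors hu hv
    have hit : (#({i} ∩ t) : ℝ) ≤ 1 := by
      exact_mod_cast card_singleton i ▸ card_le_card inter_subset_left
    norm_num at this
    linarith
  · obtain rfl | hij := eq_or_ne i j
    · have := sum_mul_le_of_mem_signedVectors_of_ne hu hv huv
      norm_num at this
      linarith
    · have := sum_mul_le_of_mem_signedVectors hu hv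
      norm_num [hij] at this
      linarith

def code9Supports : Finset (Finset (Fin 9)) := (code9.map fun c => univ.filter (c · = 1)).toFinset

theorem code9_binary : ∀ c ∈ code9, ∀ i, c i = 0 ∨ c i = 1 := by decide

theorem card_code9Supports : #code9Supports = 18 := by decide

set_option maxRecDepth 10000 in
theorem card_of_mem_code9Supports : ∀ s ∈ code9Supports, #s = 4 := by decide

set_option maxRecDepth 10000 in
theorem card_inter_le_of_mem_code9Supports :
    ∀ s ∈ code9Supports, ∀ t ∈ code9Supports, s ≠ t → #(s ∩ t) ≤ 2 := by decide

theorem LS9_eq_leechSloaneConfig : LS9 = leechSloaneConfig code9Supports := by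
  ext v
  simp only [LS9, Set.mem_union, Set.mem_ofPred_eq, mem_coe, mem_leechSloaneConfig,
    code9Supports, List.mem_toFinset, List.mem_map, exists_exists_and_eq_and, mem_signedVectors]
  refine or_congr (exists_congr fun c => and_congr_right fun hc => forall_congr' fun i => ?_)
    (exists_congr fun i => ?_)
  · rcases code9_binary c hc i with h | h <;> simp [h]
  · simp only [mem_singleton, forall_and, forall_eq]

end

theorem stmt19 :
    Set.ncard LS9 = 306 ∧
    (∀ v ∈ LS9, ∑ i, v i * v i = 4) ∧
    (∀ u ∈ LS9, ∀ v ∈ LS9, u ≠ v → ∑ i, u i * v i ≤ 2) := by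
  rw [LS9_eq_leechSloaneConfig, Set.ncard_coe_finset,
    card_leechSloaneConfig card_of_mem_code9Supports, card_code9Supports, Fintype.card_fin]
  exact ⟨rfl, fun v hv => sum_mul_self_of_mem_leechSloaneConfig card_of_mem_code9Supports hv,
    fun u hu v hv => sum_mul_le_two_of_mem_leechSloaneConfig card_of_mem_code9Supports
      card_inter_le_of_mem_code9Supports hu hv⟩
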